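/- arXiv:2108.06662 — 5 statements merged into one kernel-verified Lean document; each statement's English description precedes it below -/
import Mathlib

section
/- Let M, N be positive semidefinite n×n complex matrices with M = AA* and N = BB*, and let y ∈ ℂ^n be the vector of row sums of A∘B. Then M∘N ⪰ (A∘B)(A∘B)* ⪰ (1/n)·y·y*, where ∘ denotes the entrywise (Schur) product and ⪰ denotes the positive semidefinite (Loewner) order. -/
/-!
Write `W` for the face-splitting product of `A` and `B`, the matrix whose row `i` is the Kronecker
product of the rows `i` of `A` and `B`. By the mixed-product property `(AAᴴ) ∘ (BBᴴ) = W Wᴴ`, and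
keeping only the columns `(l, l)` of `W` leaves `A ∘ B`, so `(A ∘ B)(A ∘ B)ᴴ = W D Wᴴ` for the
orthogonal projection `D` onto those columns. Similarly, with `C = A ∘ B` and `y = C 𝟙`, the matrix
`(1/n) y yᴴ` is `C P Cᴴ` for the orthogonal projection `P = (1/n) 𝟙 𝟙ᵀ`. Both inequalities are
therefore instances of `X Xᴴ - X P Xᴴ = X (1 - P) Xᴴ ⪰ 0` for a self-adjoint idempotent `P`.
-/

open scoped ComplexOrder

namespace Matrix

variable {m k 𝕜 : Type*} [Fintype k] [RCLike 𝕜]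

theorem _root_.IsStarProjection.posSemidef {P : Matrix k k 𝕜} (hP : IsStarProjection P) :
    P.PosSemidef := by
  have hPP : P * Pᴴ = P := by
    rw [← star_eq_conjTranspose, hP.isSelfAdjoint.star_eq, hP.isIdempotentElem.eq]
  exact hPP ▸ posSemidef_self_mul_conjTranspose P

theorem posSemidef_mul_conjTranspose_sub_of_isStarProjection [Finite m] [DecidableEq k]
    (X : Matrix m k 𝕜) {P : Matrix k k 𝕜} (hP : IsStarProjection P) :
    (X * Xᴴ - X * P * Xᴴ).PosSemidef := by
  simpa [Matrix.mul_sub, Matrix.sub_mul] using hP.one_sub.posSemidef.mul_mul_conjTranspose_same X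

theorem isStarProjection_diagonal_ite [DecidableEq k] (s : k → Prop) [DecidablePred s] :
    IsStarProjection (diagonal fun i => if s i then (1 : 𝕜) else 0) := by
  refine ⟨?_, ?_⟩
  · rw [IsIdempotentElem, diagonal_mul_diagonal]
    congr 1; ext i; split_ifs <;> simp
  · rw [IsSelfAdjoint, star_eq_conjTranspose, diagonal_conjTranspose]
    congr 1; ext i; by_cases h : s i <;> simp [h]

theorem isStarProjection_inv_card_smul_vecMulVec_one_one :
    IsStarProjection ((Fintype.card k : 𝕜)⁻¹ • vecMulVec (1 : k → 𝕜) (1 : k → 𝕜)) := by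
  refine ⟨?_, ?_⟩
  · rw [IsIdempotentElem, smul_mul_smul, vecMulVec_mul_vecMulVec, one_dotProduct_one,
      vecMulVec_smul, smul_smul]
    congr 1
    simpa only [inv_inv, mul_right_comm] using mul_inv_mul_cancel (Fintype.card k : 𝕜)⁻¹
  · rw [IsSelfAdjoint, star_eq_conjTranspose, conjTranspose_smul, conjTranspose_vecMulVec]
    simp

theorem posSemidef_mul_conjTranspose_sub_inv_card_smul_vecMulVec [Finite m] [DecidableEq k]
    (X : Matrix m k 𝕜) :
    (X * Xᴴ - (Fintype.card k : 𝕜)⁻¹ • vecMulVec (X *ᵥ 1) (star (X *ᵥ 1))).PosSemidef := by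
  have hXPX : X * ((Fintype.card k : 𝕜)⁻¹ • vecMulVec (1 : k → 𝕜) 1 : Matrix k k 𝕜) * Xᴴ
      = (Fintype.card k : 𝕜)⁻¹ • vecMulVec (X *ᵥ 1) (star (X *ᵥ 1)) := by
    rw [Matrix.mul_smul, mul_vecMulVec, Matrix.smul_mul, vecMulVec_mul, star_mulVec, star_one]
  exact hXPX ▸ posSemidef_mul_conjTranspose_sub_of_isStarProjection X
    isStarProjection_inv_card_smul_vecMulVec_one_one

def faceSplittingProduct {l α : Type*} [Mul α] (A : Matrix m k α) (B : Matrix m l α) :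
    Matrix m (k × l) α :=
  of fun i p => A i p.1 * B i p.2

theorem hadamard_mul_conjTranspose_mul_conjTranspose {l n : Type*} [Fintype l]
    (A : Matrix m k 𝕜) (B : Matrix m l 𝕜) (C : Matrix n k 𝕜) (D : Matrix n l 𝕜) :
    hadamard (A * Cᴴ) (B * Dᴴ) = faceSplittingProduct A B * (faceSplittingProduct C D)ᴴ := by
  ext i j
  simp only [hadamard_apply, mul_apply, conjTranspose_apply, faceSplittingProduct, of_apply,
    Fintype.sum_prod_type, Finset.sum_mul_sum, star_mul']
  exact Finset.sum_congr rfl fun _ _ => Finset.sum_congr rfl fun _ _ => by ring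

theorem faceSplittingProduct_mul_diagonal_mul_conjTranspose [DecidableEq k]
    (A B : Matrix m k 𝕜) :
    faceSplittingProduct A B * diagonal (fun p : k × k => if p.1 = p.2 then (1 : 𝕜) else 0) *
      (faceSplittingProduct A B)ᴴ = hadamard A B * (hadamard A B)ᴴ := by
  ext i j
  rw [mul_apply, mul_apply]
  simp [mul_diagonal, faceSplittingProduct, Fintype.sum_prod_type]

theorem posSemidef_hadamard_mul_conjTranspose_sub [Finite m] [DecidableEq k]
    (A B : Matrix m k 𝕜) :
    (hadamard (A * Aᴴ) (B * Bᴴ) - hadamard A B * (hadamard A B)ᴴ).PosSemidef := by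
  rw [hadamard_mul_conjTranspose_mul_conjTranspose,
    ← faceSplittingProduct_mul_diagonal_mul_conjTranspose]
  exact posSemidef_mul_conjTranspose_sub_of_isStarProjection _ (isStarProjection_diagonal_ite _)

end Matrix

theorem schur_product_lower_bound_general {n : ℕ} (M N A B : Matrix (Fin n) (Fin n) ℂ)
    (hM : M = A * A.conjTranspose) (hN : N = B * B.conjTranspose)
    (y : Fin n → ℂ) (hy : ∀ j, y j = ∑ k, Matrix.hadamard A B j k) :
    (Matrix.hadamard M N -
      Matrix.hadamard A B * (Matrix.hadamard A B).conjTranspose).PosSemidef ∧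
    (Matrix.hadamard A B * (Matrix.hadamard A B).conjTranspose -
      (n : ℂ)⁻¹ • Matrix.vecMulVec y (star y)).PosSemidef := by
  have hy_rowSum : y = (Matrix.hadamard A B).mulVec 1 := by
    ext j
    simp [hy, Matrix.mulVec, dotProduct]
  subst hM hN hy_rowSum
  refine ⟨Matrix.posSemidef_hadamard_mul_conjTranspose_sub A B, ?_⟩
  simpa using Matrix.posSemidef_mul_conjTranspose_sub_inv_card_smul_vecMulVec (Matrix.hadamard A B)

theorem schur_product_lower_bound {n : ℕ} (M N A B : Matrix (Fin n) (Fin n) ℂ)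
    (hMpos : M.PosSemidef) (hNpos : N.PosSemidef)
    (hM : M = A * A.conjTranspose) (hN : N = B * B.conjTranspose)
    (y : Fin n → ℂ) (hy : ∀ j, y j = ∑ k, Matrix.hadamard A B j k) :
    (Matrix.hadamard M N -
      Matrix.hadamard A B * (Matrix.hadamard A B).conjTranspose).PosSemidef ∧
    (Matrix.hadamard A B * (Matrix.hadamard A B).conjTranspose -
      (n : ℂ)⁻¹ • Matrix.vecMulVec y (star y)).PosSemidef :=
  schur_product_lower_bound_general M N A B hM hN y hy
end

section
/- If M is a positive semidefinite n×n complex matrix, then M∘M̄ - (1/n)·(diag M)·(diag M)^T is positive semidefinite, where diag M is the column vector of diagonal entries of M and M̄ is the entrywise conjugate. -/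
/-!
Write `M = Cᴴ C` and, for a test vector `x`, put `B = C · diag(x̄) · Cᴴ`. Then
`x̄ᵀ (M ∘ M̄) x = tr (B Bᴴ) = ∑ |B i j|²` and `x̄ᵀ (diag M · (diag M)ᵀ) x = |tr B|²`, and
Cauchy–Schwarz gives `|tr B|² ≤ n ∑ |B i i|² ≤ n ∑ |B i j|²`.
-/

open scoped ComplexOrder
open Matrix

namespace Matrix

variable {ι : Type*}

section Star

variable {α : Type*} [Star α]

theorem IsHermitian.map_star_eq_transpose {A : Matrix ι ι α} (hA : A.IsHermitian) :
    A.map star = Aᵀ := by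
  rw [← conjTranspose_transpose, hA.eq]

theorem IsHermitian.star_diag {A : Matrix ι ι α} (hA : A.IsHermitian) : star A.diag = A.diag := by
  rw [← diag_map_star, hA.map_star_eq_transpose, diag_transpose]

end Star

variable [Fintype ι]

theorem norm_trace_sq_le_card_mul_sum_norm_sq {α : Type*} [SeminormedAddCommGroup α]
    (B : Matrix ι ι α) : ‖B.trace‖ ^ 2 ≤ Fintype.card ι * ∑ i, ∑ j, ‖B i j‖ ^ 2 :=
  calc ‖B.trace‖ ^ 2 ≤ (∑ i, ‖B i i‖) ^ 2 := by gcongr; exact norm_sum_le _ _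
    _ ≤ Fintype.card ι * ∑ i, ‖B i i‖ ^ 2 := sq_sum_le_card_mul_sum_sq
    _ ≤ Fintype.card ι * ∑ i, ∑ j, ‖B i j‖ ^ 2 := by
      gcongr with i
      exact Finset.single_le_sum (f := fun j => ‖B i j‖ ^ 2) (fun j _ => by positivity)
        (Finset.mem_univ i)

section RCLike

variable {𝕜 : Type*} [RCLike 𝕜]

theorem trace_mul_conjTranspose_self {κ : Type*} [Fintype κ] (B : Matrix ι κ 𝕜) :
    (B * Bᴴ).trace = ((∑ i, ∑ j, ‖B i j‖ ^ 2 : ℝ) : 𝕜) := by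
  simp [trace, mul_apply, RCLike.mul_conj]

theorem inv_card_mul_norm_trace_sq_le_trace_mul_conjTranspose_self (B : Matrix ι ι 𝕜) :
    (((Fintype.card ι : ℝ)⁻¹ * ‖B.trace‖ ^ 2 : ℝ) : 𝕜) ≤ (B * Bᴴ).trace := by
  rw [trace_mul_conjTranspose_self, RCLike.ofReal_le_ofReal]
  exact inv_mul_le_of_le_mul₀ (by positivity) (by positivity)
    (norm_trace_sq_le_card_mul_sum_norm_sq B)

open scoped MatrixOrder in
theorem PosSemidef.exists_eq_conjTranspose_mul_self {M : Matrix ι ι 𝕜} (hM : M.PosSemidef) :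
    ∃ C : Matrix ι ι 𝕜, M = Cᴴ * C := by
  classical
  refine ⟨CFC.sqrt M, ?_⟩
  rw [(CFC.sqrt_nonneg M).posSemidef.isHermitian.eq, CFC.sqrt_mul_sqrt_self M hM.nonneg]

end RCLike

section CommSemiring

variable {R : Type*} [CommSemiring R]

theorem dotProduct_vecMulVec_mulVec (x y u v : ι → R) :
    x ⬝ᵥ vecMulVec u v *ᵥ y = (x ⬝ᵥ u) * (v ⬝ᵥ y) := by
  rw [vecMulVec_mulVec, op_smul_eq_smul, dotProduct_smul, smul_eq_mul, mul_comm]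

variable [DecidableEq ι]

theorem dotProduct_hadamard_transpose_mulVec (x y : ι → R) (A B : Matrix ι ι R) :
    x ⬝ᵥ (A ⊙ Bᵀ) *ᵥ y = (diagonal x * A * diagonal y * B).trace := by
  rw [dotProduct_mulVec, dotProduct_vecMul_hadamard, transpose_mul, transpose_transpose,
    diagonal_transpose, mul_assoc _ (diagonal y)]

theorem dotProduct_diag (x : ι → R) (A : Matrix ι ι R) :
    x ⬝ᵥ A.diag = (diagonal x * A).trace := by
  simp [trace, dotProduct]

variable [StarRing R]

theorem dotProduct_conjTranspose_mul_self_diag (x : ι → R) (C : Matrix ι ι R) :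
    x ⬝ᵥ (Cᴴ * C).diag = (C * diagonal x * Cᴴ).trace := by
  rw [dotProduct_diag, ← mul_assoc, trace_mul_cycle]

theorem star_dotProduct_hadamard_conjTranspose_mul_self_mulVec (x : ι → R) (C : Matrix ι ι R) :
    star x ⬝ᵥ ((Cᴴ * C) ⊙ (Cᴴ * C)ᵀ) *ᵥ x =
      (C * diagonal (star x) * Cᴴ * (C * diagonal (star x) * Cᴴ)ᴴ).trace := by
  rw [dotProduct_hadamard_transpose_mulVec, conjTranspose_mul, conjTranspose_mul,
    diagonal_conjTranspose, star_star, conjTranspose_conjTranspose]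
  simp only [mul_assoc]
  rw [trace_mul_comm C]
  simp only [mul_assoc]

end CommSemiring

end Matrix

theorem hadamard_conj_diag_bound {n : ℕ} (M : Matrix (Fin n) (Fin n) ℂ)
    (hM : M.PosSemidef) :
    (Matrix.hadamard M (M.map star) -
      (n : ℂ)⁻¹ • Matrix.vecMulVec M.diag M.diag).PosSemidef := by
  have hMT := hM.isHermitian.map_star_eq_transpose
  have hd := hM.isHermitian.star_diag
  have hrankOne : (vecMulVec M.diag M.diag).PosSemidef := by
    simpa only [hd] using posSemidef_vecMulVec_self_star M.diag
  refine .of_dotProduct_mulVec_nonneg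
    ((hM.hadamard (by rw [hMT]; exact hM.transpose)).isHermitian.sub
      (hrankOne.isHermitian.smul (by simp [IsSelfAdjoint]))) fun x => ?_
  obtain ⟨C, rfl⟩ := hM.exists_eq_conjTranspose_mul_self
  set B := C * diagonal (star x) * Cᴴ
  have hdiag : (Cᴴ * C).diag ⬝ᵥ x = star B.trace := by
    rw [← dotProduct_conjTranspose_mul_self_diag, ← star_dotProduct, hd]
  rw [sub_mulVec, dotProduct_sub, smul_mulVec, dotProduct_smul, hMT,
    star_dotProduct_hadamard_conjTranspose_mul_self_mulVec, dotProduct_vecMulVec_mulVec,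
    dotProduct_conjTranspose_mul_self_diag, hdiag, Complex.star_def, RCLike.mul_conj,
    sub_nonneg, smul_eq_mul]
  simpa only [Fintype.card_fin, RCLike.ofReal_mul, RCLike.ofReal_inv, RCLike.ofReal_natCast,
    RCLike.ofReal_pow] using inv_card_mul_norm_trace_sq_le_trace_mul_conjTranspose_self B
end

section
/- If M is a positive semidefinite n×n real matrix with all diagonal entries equal to 1, then M∘M - (1/n)·E_n is positive semidefinite, where E_n is the n×n all-ones matrix. -/
/-!
Write `M = Bᵀ B` and `D = diagonal x`, and put `A = B D Bᵀ`, a symmetric matrix. By cyclicity of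
the trace, `tr A = ∑ xᵢ Mᵢᵢ = ∑ xᵢ` and `xᵀ (M ∘ M) x = tr (D M D M) = tr (A Aᵀ) = ∑ₖₗ Aₖₗ²`.
Cauchy–Schwarz on the diagonal of `A` gives `(tr A)² ≤ n ∑ₖ Aₖₖ² ≤ n ∑ₖₗ Aₖₗ²`, i.e.
`(∑ xᵢ)² ≤ n · xᵀ (M ∘ M) x`, which is the claim.
-/

namespace Matrix

variable {n : Type*}

theorem isHermitian_of_one {α : Type*} [NonAssocSemiring α] [StarRing α] :
    (of fun _ _ => (1 : α) : Matrix n n α).IsHermitian :=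
  IsHermitian.ext fun _ _ => by simp

variable [Fintype n]

theorem dotProduct_of_one_mulVec_self {α : Type*} [CommSemiring α] (x : n → α) :
    x ⬝ᵥ (of fun _ _ => (1 : α)) *ᵥ x = (∑ i, x i) ^ 2 := by
  simp [dotProduct, mulVec, sq, Finset.sum_mul]

theorem trace_diagonal_mul {α : Type*} [NonUnitalNonAssocSemiring α] [DecidableEq n]
    (x : n → α) (M : Matrix n n α) : (diagonal x * M).trace = x ⬝ᵥ M.diag := by
  simp [trace, dotProduct, diagonal_mul]

theorem sq_trace_le_card_mul_trace_mul_transpose (A : Matrix n n ℝ) :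
    A.trace ^ 2 ≤ Fintype.card n * (A * Aᵀ).trace := by
  have h_diag : ∑ k, A k k ^ 2 ≤ (A * Aᵀ).trace := by
    simp only [trace, diag, mul_apply, transpose_apply, ← sq]
    exact Finset.sum_le_sum fun k _ =>
      Finset.single_le_sum (fun l _ => sq_nonneg (A k l)) (Finset.mem_univ k)
  calc A.trace ^ 2 ≤ Fintype.card n * ∑ k, A k k ^ 2 := sq_sum_le_card_mul_sum_sq
    _ ≤ Fintype.card n * (A * Aᵀ).trace := by gcongr

theorem PosSemidef.sq_dotProduct_diag_le_card_mul_hadamard_self {M : Matrix n n ℝ}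
    (hM : M.PosSemidef) (x : n → ℝ) :
    (x ⬝ᵥ M.diag) ^ 2 ≤ Fintype.card n * (x ᵥ* (M ⊙ M) ⬝ᵥ x) := by
  classical
  open MatrixOrder in
  obtain ⟨B, rfl⟩ := CStarAlgebra.nonneg_iff_eq_star_mul_self.mp hM.nonneg
  rw [show star B = Bᵀ by ext; simp]
  set A := B * diagonal x * Bᵀ
  have h_trace : A.trace = x ⬝ᵥ (Bᵀ * B).diag := by
    rw [← trace_diagonal_mul, ← Matrix.mul_assoc, trace_mul_comm (diagonal x * Bᵀ),
      ← Matrix.mul_assoc]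
  have h_form : x ᵥ* ((Bᵀ * B) ⊙ (Bᵀ * B)) ⬝ᵥ x = (A * Aᵀ).trace := by
    simp only [dotProduct_vecMul_hadamard, A, transpose_mul, transpose_transpose,
      diagonal_transpose, Matrix.mul_assoc]
    rw [trace_mul_comm B]
    simp only [Matrix.mul_assoc]
  rw [← h_trace, h_form]
  exact sq_trace_le_card_mul_trace_mul_transpose A

end Matrix

open Matrix

theorem hadamard_square_all_ones_bound {n : ℕ} (M : Matrix (Fin n) (Fin n) ℝ)
    (hM : M.PosSemidef) (hdiag : ∀ i, M i i = 1) :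
    (Matrix.hadamard M M -
      (n : ℝ)⁻¹ • Matrix.of (fun _ _ => (1 : ℝ))).PosSemidef := by
  rw [posSemidef_iff_dotProduct_mulVec]
  refine ⟨(hM.isHermitian.hadamard hM.isHermitian).sub (isHermitian_of_one.smul (.all _)),
    fun x => ?_⟩
  have h_diag : M.diag = 1 := funext hdiag
  have h_bound := hM.sq_dotProduct_diag_le_card_mul_hadamard_self x
  rw [h_diag, dotProduct_one, Fintype.card_fin, mul_comm] at h_bound
  have h_schur := (hM.hadamard hM).dotProduct_mulVec_nonneg x
  rw [star_trivial, dotProduct_mulVec] at h_schur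
  rw [star_trivial, sub_mulVec, dotProduct_sub, smul_mulVec, dotProduct_smul,
    dotProduct_of_one_mulVec_self, smul_eq_mul, sub_nonneg, inv_mul_eq_div, dotProduct_mulVec]
  exact div_le_of_le_mul₀ n.cast_nonneg h_schur h_bound
end

section
/- For all n, d ≥ 2 and all choices of points x_1, ..., x_n ∈ ℝ^d with x_j = (x_{j,1},...,x_{j,d}), the n×n matrix with (j,k) entry ∏_{l=1}^d (1 + cos(x_{j,l} - x_{k,l}))/2 − 1/n is positive semidefinite (Novak's conjecture). -/
/-!
Put `G j k = ∏ l, cos ((x j l - x k l) / 2)`. Since `(1 + cos θ) / 2 = cos (θ / 2) ^ 2`, the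
matrix in question is `(G j k ^ 2 - 1 / n)`, and `G` is positive semidefinite with unit diagonal:
`cos (a - b) = cos a cos b + sin a sin b` makes each factor a Gram kernel, and so is their product.

Write `G = Cᴴ C` with a square `n × n` factor `C` (a matrix square root; the Gram factor coming
from the cosines has `2 ^ d` rows and would only give the bound `2 ^ (-d)`). For real `v`, the
form `∑ v j v k ‖G j k‖²` is the squared Frobenius norm of the Hermitian `n × n` matrix
`A = C diag(v) Cᴴ`, whose trace is `∑ v j`.
Cauchy–Schwarz on the diagonal of `A` gives `‖A‖²_F ≥ (tr A)² / n = (∑ v j)² / n`.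
-/

open Finset Matrix
open scoped ComplexOrder

namespace Matrix

variable {ι κ 𝕜 : Type*} [Fintype ι] [Fintype κ] [RCLike 𝕜]

theorem norm_trace_sq_le_card_mul_sum_norm_sq_s5 (A : Matrix κ κ 𝕜) :
    ‖A.trace‖ ^ 2 ≤ Fintype.card κ * ∑ s, ∑ t, ‖A s t‖ ^ 2 :=
  calc ‖A.trace‖ ^ 2 ≤ (∑ t, ‖A t t‖) ^ 2 := by gcongr; exact norm_sum_le _ _
    _ ≤ Fintype.card κ * ∑ t, ‖A t t‖ ^ 2 := sq_sum_le_card_mul_sum_sq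
    _ ≤ Fintype.card κ * ∑ s, ∑ t, ‖A s t‖ ^ 2 := by
      gcongr with s
      exact single_le_sum (f := fun t => ‖A s t‖ ^ 2) (fun _ _ => by positivity) (mem_univ s)

theorem IsHermitian.sum_mul_mul_norm_sq_eq_trace [DecidableEq ι] {H : Matrix ι ι 𝕜}
    (hH : H.IsHermitian) (v : ι → ℝ) :
    ((∑ j, ∑ k, v j * v k * ‖H j k‖ ^ 2 : ℝ) : 𝕜) =
      (diagonal (fun j => (v j : 𝕜)) * H * diagonal (fun j => (v j : 𝕜)) * H).trace := by
  simp only [trace, diag_apply, mul_apply (M := _ * _ * _), mul_diagonal, diagonal_mul]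
  push_cast
  refine sum_congr rfl fun j _ => sum_congr rfl fun k _ => ?_
  rw [← RCLike.mul_conj, ← RCLike.star_def, hH.apply]
  ring

theorem sum_mul_mul_norm_sq_conjTranspose_mul_self [DecidableEq ι] (C : Matrix κ ι 𝕜)
    (v : ι → ℝ) :
    ∑ j, ∑ k, v j * v k * ‖(Cᴴ * C) j k‖ ^ 2 =
      ∑ s, ∑ t, ‖(C * diagonal (fun j => (v j : 𝕜)) * Cᴴ) s t‖ ^ 2 := by
  classical
  set D := diagonal (fun j => (v j : 𝕜))
  have hA : (C * D * Cᴴ).IsHermitian := by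
    simp [IsHermitian, conjTranspose_mul, D, Matrix.mul_assoc, Pi.star_def]
  have hfrobenius := hA.sum_mul_mul_norm_sq_eq_trace 1
  simp only [Pi.one_apply, one_mul, RCLike.ofReal_one, diagonal_one, Matrix.mul_one]
    at hfrobenius
  apply RCLike.ofReal_injective (K := 𝕜)
  rw [(isHermitian_conjTranspose_mul_self C).sum_mul_mul_norm_sq_eq_trace, hfrobenius,
    show C * D * Cᴴ * (C * D * Cᴴ) = C * (D * Cᴴ * C * D * Cᴴ) by simp only [Matrix.mul_assoc],
    trace_mul_comm C]
  simp only [D, Matrix.mul_assoc]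

theorem trace_mul_diagonal_mul_conjTranspose [DecidableEq ι] (C : Matrix κ ι 𝕜) (v : ι → 𝕜) :
    (C * diagonal v * Cᴴ).trace = ∑ j, v j * (Cᴴ * C) j j := by
  rw [trace_mul_cycle, trace]
  simp only [diag_apply, mul_diagonal, mul_comm]

theorem PosSemidef.posSemidef_norm_sq_sub_inv_card {G : Matrix ι ι 𝕜} (hG : G.PosSemidef)
    (hdiag : ∀ j, G j j = 1) :
    (of fun j k => ‖G j k‖ ^ 2 - (Fintype.card ι : ℝ)⁻¹).PosSemidef := by
  classical
  obtain ⟨C, rfl⟩ : ∃ C : Matrix ι ι 𝕜, G = Cᴴ * C := by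
    open scoped MatrixOrder in exact CStarAlgebra.nonneg_iff_eq_star_mul_self.mp hG.nonneg
  rw [posSemidef_iff_dotProduct_mulVec]
  refine ⟨?_, fun v => ?_⟩
  · ext j k
    simp [← hG.isHermitian.apply j k]
  set A := C * diagonal (fun j => (v j : 𝕜)) * Cᴴ
  have hquad : star v ⬝ᵥ (of fun j k => ‖(Cᴴ * C) j k‖ ^ 2 - (Fintype.card ι : ℝ)⁻¹) *ᵥ v =
      ∑ s, ∑ t, ‖A s t‖ ^ 2 - (Fintype.card ι : ℝ)⁻¹ * (∑ j, v j) ^ 2 := by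
    rw [← sum_mul_mul_norm_sq_conjTranspose_mul_self, sq, sum_mul_sum, mul_sum]
    simp only [dotProduct, mulVec, star_trivial, of_apply, mul_sum, ← sum_sub_distrib]
    refine sum_congr rfl fun j _ => sum_congr rfl fun k _ => ?_
    ring
  have htrace : ‖A.trace‖ ^ 2 = (∑ j, v j) ^ 2 := by
    rw [trace_mul_diagonal_mul_conjTranspose]
    simp only [hdiag, mul_one]
    rw [← RCLike.ofReal_sum, RCLike.norm_ofReal, sq_abs]
  have hfrobenius := norm_trace_sq_le_card_mul_sum_norm_sq_s5 A
  rw [htrace] at hfrobenius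
  rw [hquad, sub_nonneg]
  calc (Fintype.card ι : ℝ)⁻¹ * (∑ j, v j) ^ 2
      ≤ (Fintype.card ι : ℝ)⁻¹ * (Fintype.card ι * ∑ s, ∑ t, ‖A s t‖ ^ 2) := by gcongr
    _ ≤ ∑ s, ∑ t, ‖A s t‖ ^ 2 := by
      rw [← mul_assoc]
      exact mul_le_of_le_one_left (by positivity) inv_mul_le_one

open Real in
theorem posSemidef_prod_cos_sub {L : Type*} [Fintype L] (y : ι → L → ℝ) :
    (of fun j k => ∏ l, cos (y j l - y k l)).PosSemidef := by
  classical
  let f : Fin 2 → ℝ → ℝ := ![cos, sin]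
  have hcos : ∀ a b, cos (a - b) = ∑ c, f c a * f c b := fun a b => by
    simp [f, cos_sub]
  let B : Matrix (L → Fin 2) ι ℝ := of fun s j => ∏ l, f (s l) (y j l)
  convert posSemidef_conjTranspose_mul_self B using 1
  ext j k
  simp only [of_apply, mul_apply, conjTranspose_apply, star_trivial, B, ← prod_mul_distrib]
  simp only [hcos, Fintype.prod_sum]

end Matrix

theorem Real.one_add_cos_div_two (θ : ℝ) : (1 + cos θ) / 2 = cos (θ / 2) ^ 2 := by
  rw [cos_sq]
  ring_nf

theorem novak_conjecture_general {n d : ℕ}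
    (x : Fin n → Fin d → ℝ) :
    (Matrix.of (fun j k : Fin n =>
      (∏ l : Fin d, (1 + Real.cos (x j l - x k l)) / 2) - (n : ℝ)⁻¹)).PosSemidef := by
  have hG := posSemidef_prod_cos_sub (fun j l => x j l / 2)
  convert hG.posSemidef_norm_sq_sub_inv_card (by simp) using 1
  ext j k
  simp only [of_apply, Real.norm_eq_abs, sq_abs, ← prod_pow, Real.one_add_cos_div_two, sub_div,
    Fintype.card_fin]

theorem novak_conjecture {n d : ℕ} (hn : 2 ≤ n) (hd : 2 ≤ d)
    (x : Fin n → Fin d → ℝ) :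
    (Matrix.of (fun j k : Fin n =>
      (∏ l : Fin d, (1 + Real.cos (x j l - x k l)) / 2) - (n : ℝ)⁻¹)).PosSemidef :=
  novak_conjecture_general x
end

section
/- Let A be a commutative unital C*-algebra, M, N ∈ M_n(A) positive with M = AA* and N = BB*, and let y ∈ Aⁿ be the vector of row sums of A∘B. Then M∘N ⪰ (A∘B)(A∘B)* ⪰ (1/n)·y·y* in M_n(A). -/
/-- A matrix over a C*-algebra is positive if it is self-adjoint and
`⟨Mx, x⟩ = ∑ j, (Mx)_j (x_j)* ≥ 0` for every `x` in the standard Hilbert C*-module `Aⁿ`. -/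
def MatIsPositive {A : Type*} [Ring A] [StarRing A] [PartialOrder A] {n : ℕ}
    (M : Matrix (Fin n) (Fin n) A) : Prop :=
  M.IsHermitian ∧ ∀ x : Fin n → A, 0 ≤ ∑ j, M.mulVec x j * star (x j)

section aux

variable {A : Type*} [NormedCommRing A] [StarRing A] {n : ℕ}

theorem gram_sum {ι : Type*} [Fintype ι]
    (c : Matrix (Fin n) ι A) (x : Fin n → A) :
    ∑ j, (c * c.conjTranspose).mulVec x j * star (x j)
      = ∑ i, (∑ j, c j i * star (x j)) * star (∑ j, c j i * star (x j)) := by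
  simp only [Matrix.mulVec, dotProduct, Matrix.mul_apply, Matrix.conjTranspose_apply,
    Finset.sum_mul, Finset.mul_sum, star_sum, star_mul', star_star]
  rw [show (∑ j : Fin n, ∑ k : Fin n, ∑ i : ι, c j i * star (c k i) * x k * star (x j))
      = ∑ j : Fin n, ∑ i : ι, ∑ k : Fin n, c j i * star (c k i) * x k * star (x j) from
      Finset.sum_congr rfl fun j _ => Finset.sum_comm, Finset.sum_comm]
  refine Finset.sum_congr rfl fun i _ => ?_
  rw [Finset.sum_comm]
  exact Finset.sum_congr rfl fun j _ => Finset.sum_congr rfl fun k _ => by ring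

theorem vecMulVec_sum (y x : Fin n → A) :
    ∑ j, (Matrix.vecMulVec y (star y)).mulVec x j * star (x j)
      = (∑ j, y j * star (x j)) * star (∑ j, y j * star (x j)) := by
  simp only [Matrix.mulVec, dotProduct, Matrix.vecMulVec_apply, Pi.star_apply,
    Finset.sum_mul, Finset.mul_sum, star_sum, star_mul', star_star]
  rw [Finset.sum_comm]
  exact Finset.sum_congr rfl fun j _ => Finset.sum_congr rfl fun k _ => by ring

theorem lagrange_id (u : Fin n → A) :
    ∑ m, ∑ l, (u m - u l) * star (u m - u l)
      = (2 * n) • (∑ m, u m * star (u m))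
        - 2 • ((∑ m, u m) * star (∑ m, u m)) := by
  have h1 : ∀ m l, (u m - u l) * star (u m - u l)
      = u m * star (u m) + u l * star (u l) - u m * star (u l) - u l * star (u m) := by
    intro m l; rw [star_sub]; ring
  simp only [h1, Finset.sum_sub_distrib, Finset.sum_add_distrib, Finset.sum_const,
    Finset.card_univ, Fintype.card_fin, ← Finset.sum_mul, ← Finset.mul_sum, star_sum]
  rw [← Finset.smul_sum, two_mul, add_smul, two_smul]
  abel

theorem hadamard_isHermitian {M N : Matrix (Fin n) (Fin n) A}
    (hM : M.IsHermitian) (hN : N.IsHermitian) : (Matrix.hadamard M N).IsHermitian := by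
  ext i j
  simp only [Matrix.conjTranspose_apply, Matrix.hadamard_apply, star_mul']
  rw [hM.apply, hN.apply]

theorem vecMulVec_star_isHermitian (y : Fin n → A) :
    (Matrix.vecMulVec y (star y)).IsHermitian := by
  ext i j
  simp only [Matrix.conjTranspose_apply, Matrix.vecMulVec_apply, Pi.star_apply, star_mul',
    star_star]
  ring

theorem hadamard_gram_eq (a b : Matrix (Fin n) (Fin n) A) :
    Matrix.hadamard (a * a.conjTranspose) (b * b.conjTranspose)
      = (Matrix.of fun j (p : Fin n × Fin n) => a j p.1 * b j p.2) *
        (Matrix.of fun j (p : Fin n × Fin n) => a j p.1 * b j p.2).conjTranspose := by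
  ext j k
  simp only [Matrix.hadamard_apply, Matrix.mul_apply, Matrix.conjTranspose_apply,
    Matrix.of_apply, star_mul', Finset.sum_mul_sum, Fintype.sum_prod_type]
  exact Finset.sum_congr rfl fun m _ => Finset.sum_congr rfl fun l _ => by ring

end aux

section cs

variable {A : Type*} [NormedCommRing A] [StarRing A]
    [CStarRing A] [CompleteSpace A] [NormedAlgebra ℂ A] [StarModule ℂ A] [PartialOrder A]
    [StarOrderedRing A] {n : ℕ}

theorem cs_sum (u : Fin n → A) :
    (n : ℂ)⁻¹ • ((∑ m, u m) * star (∑ m, u m)) ≤ ∑ m, u m * star (u m) := by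
  rcases Nat.eq_zero_or_pos n with hn | hn
  · subst hn
    simp
  · rw [← sub_nonneg]
    set T := ∑ m, u m * star (u m) with hT
    set S := (∑ m, u m) * star (∑ m, u m) with hS
    set c : ℂ := (((Real.sqrt (2 * n))⁻¹ : ℝ) : ℂ) with hc
    have hnC : (n : ℂ) ≠ 0 := Nat.cast_ne_zero.mpr hn.ne'
    have hcc : c * c = ((2 : ℂ) * n)⁻¹ := by
      rw [hc]
      norm_cast
      rw [← Real.sqrt_inv, Real.mul_self_sqrt (by positivity)]
      push_cast
      ring
    have hid : T - (n : ℂ)⁻¹ • S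
        = ∑ m, ∑ l, (c • (u m - u l)) * star (c • (u m - u l)) := by
      have hterm : ∀ m l : Fin n, (c • (u m - u l)) * star (c • (u m - u l))
          = ((2 : ℂ) * n)⁻¹ • ((u m - u l) * star (u m - u l)) := by
        intro m l
        rw [star_smul, smul_mul_smul_comm, ← hcc]
        congr 1
        rw [hc, Complex.star_def, Complex.conj_ofReal]
      simp only [hterm, ← Finset.smul_sum, lagrange_id]
      rw [smul_sub]
      congr 1
      · rw [← Nat.cast_smul_eq_nsmul ℂ, smul_smul]
        rw [show ((2 : ℂ) * n)⁻¹ * ((2 * n : ℕ) : ℂ) = 1 by push_cast; field_simp]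
        rw [one_smul]
      · rw [← Nat.cast_smul_eq_nsmul ℂ, smul_smul]
        congr 1
        push_cast
        field_simp
    rw [hid]
    exact Finset.sum_nonneg fun m _ => Finset.sum_nonneg fun l _ => mul_star_self_nonneg _

end cs

theorem cstar_comm_schur_lower_bound {A : Type*} [NormedCommRing A] [StarRing A]
    [CStarRing A] [CompleteSpace A] [NormedAlgebra ℂ A] [StarModule ℂ A] [PartialOrder A]
    [StarOrderedRing A] {n : ℕ}
    (M N a b : Matrix (Fin n) (Fin n) A)
    (hMpos : MatIsPositive M) (hNpos : MatIsPositive N)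
    (hM : M = a * a.conjTranspose) (hN : N = b * b.conjTranspose)
    (y : Fin n → A) (hy : ∀ j, y j = ∑ k, Matrix.hadamard a b j k) :
    MatIsPositive (Matrix.hadamard M N -
      Matrix.hadamard a b * (Matrix.hadamard a b).conjTranspose) ∧
    MatIsPositive (Matrix.hadamard a b * (Matrix.hadamard a b).conjTranspose -
      (n : ℂ)⁻¹ • Matrix.vecMulVec y (star y)) := by
  set C := Matrix.hadamard a b with hC
  have hCherm : (C * C.conjTranspose).IsHermitian :=
    Matrix.isHermitian_mul_conjTranspose_self C
  constructor
  · constructor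
    · exact (hadamard_isHermitian hMpos.1 hNpos.1).sub hCherm
    · intro x
      rw [Matrix.sub_mulVec]
      simp only [Pi.sub_apply, sub_mul, Finset.sum_sub_distrib, sub_nonneg]
      subst hM hN
      rw [hadamard_gram_eq, gram_sum, gram_sum]
      set v : Fin n × Fin n → A := fun p => ∑ j, a j p.1 * b j p.2 * star (x j) with hv
      have h1 : ∀ m : Fin n, (∑ j, C j m * star (x j)) = v (m, m) := by
        intro m
        exact Finset.sum_congr rfl fun j _ => by rw [hC, Matrix.hadamard_apply]
      have h2 : ∀ p : Fin n × Fin n,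
          (∑ j, (Matrix.of fun j (p : Fin n × Fin n) => a j p.1 * b j p.2) j p * star (x j))
            = v p := fun p => rfl
      simp only [h1, h2]
      have h3 : (∑ m : Fin n, v (m, m) * star (v (m, m)))
          = ∑ p : Fin n × Fin n, if p.1 = p.2 then v p * star (v p) else 0 := by
        rw [Fintype.sum_prod_type]
        refine Finset.sum_congr rfl fun m _ => ?_
        rw [Finset.sum_ite_eq]
        simp
      rw [h3, ← sub_nonneg, ← Finset.sum_sub_distrib]
      refine Finset.sum_nonneg fun p _ => ?_
      by_cases h : p.1 = p.2
      · simp [h]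
      · simp only [h, if_false, sub_zero]
        exact mul_star_self_nonneg _
  · constructor
    · refine hCherm.sub ?_
      unfold Matrix.IsHermitian
      rw [Matrix.conjTranspose_smul, (vecMulVec_star_isHermitian y)]
      congr 1
      rw [Complex.star_def, map_inv₀, Complex.conj_natCast]
    · intro x
      rw [Matrix.sub_mulVec, Matrix.smul_mulVec]
      simp only [Pi.sub_apply, sub_mul, Finset.sum_sub_distrib, sub_nonneg, Pi.smul_apply,
        smul_mul_assoc, ← Finset.smul_sum]
      rw [gram_sum, vecMulVec_sum]
      set w : Fin n → A := fun m => ∑ j, C j m * star (x j) with hw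
      have hs : (∑ j, y j * star (x j)) = ∑ m, w m := by
        simp only [hy, Finset.sum_mul, hw]
        exact Finset.sum_comm
      rw [hs]
      exact cs_sum w
end
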